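/- arXiv:2312.05418 — 6 statements merged into one kernel-verified Lean document; each statement's English description precedes it below -/
import Mathlib

section
/- Let A, Q be d×d complex matrices with Q Hermitian and invertible, and suppose X is an invertible d×d matrix satisfying the modified nonlinear matrix equation X = Q + A*X⁻¹A, such that Y := X + AQ⁻¹A* is invertible. Set B = AQ⁻¹A and R = Q + A*Q⁻¹A + AQ⁻¹A*. Then Y satisfies the standard nonlinear matrix equation Y = R − B*Y⁻¹B; equivalently, the solution X of the modified NME can be recovered from the solution Y of the standard NME by X = Y − AQ⁻¹A*. -/
open Matrix

/-! The Sherman–Morrison–Woodbury identity applied to `X = Q + C X⁻¹ A` expresses `X⁻¹` through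
`Y = X + A Q⁻¹ C`. Substituting that expression back into the equation gives
`Y = Q + C Q⁻¹ A + A Q⁻¹ C - (C Q⁻¹ C) Y⁻¹ (A Q⁻¹ A)`, and for `C = Aᴴ` with `Q` Hermitian the
factor `C Q⁻¹ C` is `(A Q⁻¹ A)ᴴ`. -/

namespace Matrix

variable {n R : Type*} [Fintype n] [DecidableEq n] [CommRing R]

theorem inv_eq_sub_of_eq_add_mul_inv_mul {A C Q X : Matrix n n R} (hQ : IsUnit Q) (hX : IsUnit X)
    (heq : X = Q + C * X⁻¹ * A) (hY : IsUnit (X + A * Q⁻¹ * C)) :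
    X⁻¹ = Q⁻¹ - Q⁻¹ * C * (X + A * Q⁻¹ * C)⁻¹ * A * Q⁻¹ := by
  have hXX : X⁻¹⁻¹ = X := nonsing_inv_nonsing_inv X ((isUnit_iff_isUnit_det X).mp hX)
  conv_lhs => rw [heq]
  rw [add_mul_mul_inv_eq_sub Q C X⁻¹ A hQ (isUnit_nonsing_inv_iff.mpr hX) (by rwa [hXX]), hXX]

theorem add_mul_inv_mul_eq_of_eq_add_mul_inv_mul {A C Q X : Matrix n n R} (hQ : IsUnit Q)
    (hX : IsUnit X) (heq : X = Q + C * X⁻¹ * A) (hY : IsUnit (X + A * Q⁻¹ * C)) :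
    X + A * Q⁻¹ * C = Q + C * Q⁻¹ * A + A * Q⁻¹ * C
      - C * Q⁻¹ * C * (X + A * Q⁻¹ * C)⁻¹ * (A * Q⁻¹ * A) := by
  have hXinv := inv_eq_sub_of_eq_add_mul_inv_mul hQ hX heq hY
  set Y := X + A * Q⁻¹ * C
  calc Y = Q + C * X⁻¹ * A + A * Q⁻¹ * C := by rw [← heq]
    _ = _ := by rw [hXinv]; noncomm_ring

end Matrix

/-- Reduction of the modified NME `X = Q + A* X⁻¹ A` to the standard NME: with
`Y = X + A Q⁻¹ A*`, `B = A Q⁻¹ A` and `R = Q + A* Q⁻¹ A + A Q⁻¹ A*`, the matrix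
`Y` satisfies `Y = R - B* Y⁻¹ B`, and `X = Y - A Q⁻¹ A*`. -/
theorem modified_nme_reduction (d : ℕ) (A Q X : Matrix (Fin d) (Fin d) ℂ)
    (hQh : Q.IsHermitian) (hQ : IsUnit Q.det) (hX : IsUnit X.det)
    (heq : X = Q + Aᴴ * X⁻¹ * A)
    (hY : IsUnit (X + A * Q⁻¹ * Aᴴ).det) :
    (X + A * Q⁻¹ * Aᴴ) =
        (Q + Aᴴ * Q⁻¹ * A + A * Q⁻¹ * Aᴴ)
          - (A * Q⁻¹ * A)ᴴ * (X + A * Q⁻¹ * Aᴴ)⁻¹ * (A * Q⁻¹ * A) ∧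
    X = (X + A * Q⁻¹ * Aᴴ) - A * Q⁻¹ * Aᴴ := by
  have hB : (A * Q⁻¹ * A)ᴴ = Aᴴ * Q⁻¹ * Aᴴ := by
    rw [conjTranspose_mul, conjTranspose_mul, hQh.inv.eq, mul_assoc]
  refine ⟨?_, (add_sub_cancel_right X _).symm⟩
  rw [hB]
  exact add_mul_inv_mul_eq_of_eq_add_mul_inv_mul ((isUnit_iff_isUnit_det Q).mpr hQ)
    ((isUnit_iff_isUnit_det X).mpr hX) heq ((isUnit_iff_isUnit_det _).mpr hY)
end

section
/- Let P₀ = [[6,22],[22,84]] and P₁ = [[2,7],[11,38]] (real 2×2 matrices). Then X = [[1,5],[5,26]] is positive definite and satisfies the nonlinear matrix equation X = P₀ − P₁ᵀX⁻¹P₁, and the matrices H₀ = [[1,0],[5,1]], H₁ = [[2,1],[7,3]] satisfy the spectral factorization identities H₀H₀ᵀ + H₁H₁ᵀ = P₀ and H₀H₁ᵀ = P₁. -/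
/-!
`X` is the Gram matrix `H₀ H₀ᵀ` of the unimodular constant coefficient `H₀` of the
spectral factor, hence positive definite. The factorization identities then give
`P₁ᵀ X⁻¹ P₁ = H₁ H₀ᵀ (H₀ H₀ᵀ)⁻¹ H₀ H₁ᵀ = H₁ H₁ᵀ = P₀ - X`, which is the matrix equation.
-/

open Matrix

theorem Matrix.transpose_fin_two_of {α : Type*} (a b c d : α) :
    !![a, b; c, d]ᵀ = !![a, c; b, d] := by
  ext i j
  fin_cases i <;> fin_cases j <;> rfl

theorem Matrix.posDef_mul_conjTranspose_self_of_isUnit {n R : Type*} [Fintype n]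
    [DecidableEq n] [CommRing R] [PartialOrder R] [StarRing R] [StarOrderedRing R]
    [NoZeroDivisors R] {H : Matrix n n R} (hH : IsUnit H) : (H * Hᴴ).PosDef := by
  simpa [star_eq_conjTranspose] using hH.posDef_star_right_conjugate_iff.mpr PosDef.one

/-- `H₀ + H₁ z⁻¹` is a left spectral factor of `P₁ᵀ z⁻¹ + P₀ + P₁ z`. -/
def IsSpectralFactorization {n R : Type*} [Fintype n] [CommRing R]
    (P₀ P₁ H₀ H₁ : Matrix n n R) : Prop :=
  H₀ * H₀ᵀ + H₁ * H₁ᵀ = P₀ ∧ H₀ * H₁ᵀ = P₁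

theorem IsSpectralFactorization.mul_transpose_self_eq {n R : Type*} [Fintype n]
    [DecidableEq n] [CommRing R] {P₀ P₁ H₀ H₁ : Matrix n n R}
    (h : IsSpectralFactorization P₀ P₁ H₀ H₁) (hH₀ : IsUnit H₀.det) :
    H₀ * H₀ᵀ = P₀ - P₁ᵀ * (H₀ * H₀ᵀ)⁻¹ * P₁ := by
  obtain ⟨rfl, rfl⟩ := h
  have hH₀t : IsUnit H₀ᵀ.det := by rwa [det_transpose]
  have hcorrection : (H₀ * H₁ᵀ)ᵀ * (H₀ * H₀ᵀ)⁻¹ * (H₀ * H₁ᵀ) = H₁ * H₁ᵀ := by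
    rw [transpose_mul, transpose_transpose, Matrix.mul_inv_rev]
    simp only [Matrix.mul_assoc]
    rw [nonsing_inv_mul_cancel_left _ _ hH₀, mul_nonsing_inv_cancel_left _ _ hH₀t]
  rw [hcorrection, add_sub_cancel_right]

/-- Ephremidze's singular example: `X = [[1,5],[5,26]]` is positive definite,
solves the NME `X = P₀ − P₁ᵀ X⁻¹ P₁`, and `H₀ = [[1,0],[5,1]]`,
`H₁ = [[2,1],[7,3]]` give the spectral factorization of `P(z)`. -/
theorem ephremidze_example
    (P₀ P₁ X H₀ H₁ : Matrix (Fin 2) (Fin 2) ℝ)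
    (hP₀ : P₀ = !![6, 22; 22, 84])
    (hP₁ : P₁ = !![2, 7; 11, 38])
    (hX : X = !![1, 5; 5, 26])
    (hH₀ : H₀ = !![1, 0; 5, 1])
    (hH₁ : H₁ = !![2, 1; 7, 3]) :
    X.PosDef ∧ X = P₀ - P₁ᵀ * X⁻¹ * P₁ ∧
    H₀ * H₀ᵀ + H₁ * H₁ᵀ = P₀ ∧ H₀ * H₁ᵀ = P₁ := by
  subst hP₀ hP₁ hX hH₀ hH₁
  have hfactor : IsSpectralFactorization (!![6, 22; 22, 84] : Matrix (Fin 2) (Fin 2) ℝ)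
      !![2, 7; 11, 38] !![1, 0; 5, 1] !![2, 1; 7, 3] := by
    constructor <;> norm_num [transpose_fin_two_of]
  have hgram :
      (!![1, 5; 5, 26] : Matrix (Fin 2) (Fin 2) ℝ) = !![1, 0; 5, 1] * !![1, 0; 5, 1]ᵀ := by
    norm_num [transpose_fin_two_of]
  have hdet : IsUnit (!![1, 0; 5, 1] : Matrix (Fin 2) (Fin 2) ℝ).det := by
    simp [det_fin_two_of]
  refine ⟨?_, ?_, hfactor⟩
  · rw [hgram, ← conjTranspose_eq_transpose_of_trivial]
    exact posDef_mul_conjTranspose_self_of_isUnit ((isUnit_iff_isUnit_det _).mpr hdet)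
  · rw [hgram]
    exact hfactor.mul_transpose_self_eq hdet
end

section
/- Let P₀ = [[1,0],[0,1]] and P₁ = (1/8)·[[4,−(1+√7)],[1+√7,−√7]] (real 2×2 matrices). Then X = (1/8)·[[4,√7+1],[√7+1,4]] is positive definite and satisfies the nonlinear matrix equation X = P₀ − P₁ᵀX⁻¹P₁, and the matrices H₀ = (√2/8)·[[4,0],[√7+1,√7−1]], H₁ = (√2/8)·[[4,0],[−(√7+1),√7−1]] satisfy the spectral factorization identities H₀H₀ᵀ + H₁H₁ᵀ = P₀ and H₀H₁ᵀ = P₁. -/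
/-!
The factor `H₀` is invertible and `X = H₀ H₀ᵀ`. Once `P₀ = H₀ H₀ᵀ + H₁ H₁ᵀ` and `P₁ = H₀ H₁ᵀ`
are checked by direct computation, the nonlinear matrix equation is automatic:
`P₁ᵀ X⁻¹ P₁ = H₁ H₀ᵀ (H₀ᵀ)⁻¹ H₀⁻¹ H₀ H₁ᵀ = H₁ H₁ᵀ`, so `P₀ - P₁ᵀ X⁻¹ P₁ = H₀ H₀ᵀ = X`;
and `X` is positive definite as the Gram matrix of an invertible matrix.
-/

open Matrix

section SpectralFactor

variable {n R : Type*} [Fintype n] [DecidableEq n] [CommRing R]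

theorem Matrix.transpose_mul_inv_mul_eq_of_isUnit {H₀ : Matrix n n R} (hH₀ : IsUnit H₀)
    (H₁ : Matrix n n R) :
    (H₀ * H₁ᵀ)ᵀ * (H₀ * H₀ᵀ)⁻¹ * (H₀ * H₁ᵀ) = H₁ * H₁ᵀ := by
  have hdet : IsUnit H₀.det := (isUnit_iff_isUnit_det H₀).1 hH₀
  have hdetT : IsUnit H₀ᵀ.det := by rwa [det_transpose]
  rw [transpose_mul, transpose_transpose, mul_inv_rev]
  simp only [Matrix.mul_assoc]
  rw [nonsing_inv_mul_cancel_left _ _ hdet, mul_nonsing_inv_cancel_left _ _ hdetT]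

theorem Matrix.mul_transpose_self_eq_sub_of_isUnit {H₀ : Matrix n n R} (hH₀ : IsUnit H₀)
    (H₁ : Matrix n n R) :
    H₀ * H₀ᵀ = H₀ * H₀ᵀ + H₁ * H₁ᵀ - (H₀ * H₁ᵀ)ᵀ * (H₀ * H₀ᵀ)⁻¹ * (H₀ * H₁ᵀ) := by
  rw [transpose_mul_inv_mul_eq_of_isUnit hH₀, add_sub_cancel_right]

theorem Matrix.posDef_mul_transpose_self_of_isUnit [PartialOrder R] [StarRing R] [TrivialStar R]
    [StarOrderedRing R] [NoZeroDivisors R] {A : Matrix n n R} (hA : IsUnit A) :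
    (A * Aᵀ).PosDef := by
  simpa [conjTranspose_eq_transpose_of_trivial] using
    PosDef.mul_conjTranspose_self A (vecMul_injective_of_isUnit hA)

end SpectralFactor

theorem chuiLian_isUnit_H₀ :
    IsUnit ((√2 / 8) • !![4, 0; √7 + 1, √7 - 1] : Matrix (Fin 2) (Fin 2) ℝ) := by
  have h7 : 0 < √7 - 1 := sub_pos.2 (Real.lt_sqrt_of_sq_lt (by norm_num))
  rw [isUnit_iff_isUnit_det, det_smul, det_fin_two_of, isUnit_iff_ne_zero, zero_mul, sub_zero]
  positivity

theorem chuiLian_H₀_mul_transpose_self :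
    ((√2 / 8) • !![4, 0; √7 + 1, √7 - 1]) * ((√2 / 8) • !![4, 0; √7 + 1, √7 - 1])ᵀ =
      (1 / 8 : ℝ) • !![4, √7 + 1; √7 + 1, 4] := by
  ext i j
  fin_cases i <;> fin_cases j <;> simp [mul_apply, Fin.sum_univ_two] <;> grind

theorem chuiLian_H₀_mul_transpose_add_H₁_mul_transpose :
    ((√2 / 8) • !![4, 0; √7 + 1, √7 - 1]) * ((√2 / 8) • !![4, 0; √7 + 1, √7 - 1])ᵀ +
      ((√2 / 8) • !![4, 0; -(√7 + 1), √7 - 1]) * ((√2 / 8) • !![4, 0; -(√7 + 1), √7 - 1])ᵀ =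
      (!![1, 0; 0, 1] : Matrix (Fin 2) (Fin 2) ℝ) := by
  ext i j
  fin_cases i <;> fin_cases j <;> simp [Fin.sum_univ_two, vecMul, dotProduct] <;> grind

theorem chuiLian_H₀_mul_transpose_H₁ :
    ((√2 / 8) • !![4, 0; √7 + 1, √7 - 1]) * ((√2 / 8) • !![4, 0; -(√7 + 1), √7 - 1])ᵀ =
      (1 / 8 : ℝ) • !![4, -(1 + √7); 1 + √7, -√7] := by
  ext i j
  fin_cases i <;> fin_cases j <;> simp [mul_apply, Fin.sum_univ_two] <;> grind

/-- The Chui–Lian product filter: `X = (1/8)·[[4,√7+1],[√7+1,4]]` is positive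
definite, solves the NME `X = P₀ − P₁ᵀ X⁻¹ P₁`, and `H₀`, `H₁` give the
spectral factorization (the new supercompact multiscaling function). -/
theorem chui_lian_example
    (P₀ P₁ X H₀ H₁ : Matrix (Fin 2) (Fin 2) ℝ)
    (hP₀ : P₀ = !![1, 0; 0, 1])
    (hP₁ : P₁ = (1 / 8 : ℝ) •
      !![4, -(1 + Real.sqrt 7); 1 + Real.sqrt 7, -Real.sqrt 7])
    (hX : X = (1 / 8 : ℝ) •
      !![4, Real.sqrt 7 + 1; Real.sqrt 7 + 1, 4])
    (hH₀ : H₀ = (Real.sqrt 2 / 8) •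
      !![4, 0; Real.sqrt 7 + 1, Real.sqrt 7 - 1])
    (hH₁ : H₁ = (Real.sqrt 2 / 8) •
      !![4, 0; -(Real.sqrt 7 + 1), Real.sqrt 7 - 1]) :
    X.PosDef ∧ X = P₀ - P₁ᵀ * X⁻¹ * P₁ ∧
    H₀ * H₀ᵀ + H₁ * H₁ᵀ = P₀ ∧ H₀ * H₁ᵀ = P₁ := by
  have hunit : IsUnit H₀ := hH₀ ▸ chuiLian_isUnit_H₀
  have hX' : X = H₀ * H₀ᵀ := by rw [hX, hH₀, chuiLian_H₀_mul_transpose_self]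
  have hP₀' : H₀ * H₀ᵀ + H₁ * H₁ᵀ = P₀ := by rw [hP₀, hH₀, hH₁, chuiLian_H₀_mul_transpose_add_H₁_mul_transpose]
  have hP₁' : H₀ * H₁ᵀ = P₁ := by rw [hP₁, hH₀, hH₁, chuiLian_H₀_mul_transpose_H₁]
  refine ⟨hX' ▸ posDef_mul_transpose_self_of_isUnit hunit, ?_, hP₀', hP₁'⟩
  rw [← hP₀', ← hP₁', hX']
  exact mul_transpose_self_eq_sub_of_isUnit hunit H₁
end

section
/- Let P₀ = [[1,0],[0,1]] and P₁ = (1/4)·[[2,−√3],[√3,−1]] (real 2×2 matrices). Then X = (1/4)·[[2,√3],[√3,2]] is positive definite and satisfies the nonlinear matrix equation X = P₀ − P₁ᵀX⁻¹P₁, and the matrices H₀ = (√2/4)·[[2,0],[√3,1]], H₁ = (√2/4)·[[2,0],[−√3,1]] satisfy the spectral factorization identities H₀H₀ᵀ + H₁H₁ᵀ = P₀ and H₀H₁ᵀ = P₁. -/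
/-!
The matrices `H₀`, `H₁` form a spectral factorization of `P(z)`, so the equation
`X = P₀ - P₁ᵀ X⁻¹ P₁` holds for `X = H₀ H₀ᵀ` for a structural reason: with `P₁ = H₀ H₁ᵀ` and
`H₀` invertible, `P₁ᵀ (H₀ H₀ᵀ)⁻¹ P₁ = H₁ H₁ᵀ`, hence `P₀ - P₁ᵀ X⁻¹ P₁ = P₀ - H₁ H₁ᵀ = H₀ H₀ᵀ`.
Positive definiteness of `X` is that of a Gram matrix `H₀ H₀ᵀ` with `H₀` invertible; only
`X = H₀ H₀ᵀ`, the two factorization identities and `det H₀ ≠ 0` are direct computations.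
-/

open Matrix

namespace Matrix

variable {n R : Type*} [Fintype n] [DecidableEq n]

theorem transpose_mul_inv_mul_of_mul_transpose [CommRing R] {H₀ H₁ : Matrix n n R}
    (h : IsUnit H₀.det) :
    (H₀ * H₁ᵀ)ᵀ * (H₀ * H₀ᵀ)⁻¹ * (H₀ * H₁ᵀ) = H₁ * H₁ᵀ := by
  have hT : IsUnit H₀ᵀ.det := by rwa [det_transpose]
  rw [transpose_mul, transpose_transpose, mul_inv_rev]
  calc H₁ * H₀ᵀ * (H₀ᵀ⁻¹ * H₀⁻¹) * (H₀ * H₁ᵀ)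
      = H₁ * (H₀ᵀ * H₀ᵀ⁻¹) * (H₀⁻¹ * H₀) * H₁ᵀ := by simp only [Matrix.mul_assoc]
    _ = H₁ * H₁ᵀ := by
      rw [mul_nonsing_inv _ hT, nonsing_inv_mul _ h, Matrix.mul_one, Matrix.mul_one]

theorem mul_transpose_self_eq_sub_of_spectral_factor [CommRing R] {P₀ P₁ H₀ H₁ : Matrix n n R}
    (h : IsUnit H₀.det) (hP₀ : H₀ * H₀ᵀ + H₁ * H₁ᵀ = P₀) (hP₁ : H₀ * H₁ᵀ = P₁) :
    H₀ * H₀ᵀ = P₀ - P₁ᵀ * (H₀ * H₀ᵀ)⁻¹ * P₁ := by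
  rw [← hP₀, ← hP₁, transpose_mul_inv_mul_of_mul_transpose h, add_sub_cancel_right]

theorem posDef_mul_transpose_self [CommRing R] [PartialOrder R] [StarRing R] [TrivialStar R]
    [StarOrderedRing R] [NoZeroDivisors R] {A : Matrix n n R} (h : IsUnit A.det) :
    (A * Aᵀ).PosDef := by
  simpa [conjTranspose_eq_transpose_of_trivial] using
    PosDef.mul_conjTranspose_self A (vecMul_injective_of_isUnit ((isUnit_iff_isUnit_det A).2 h))

end Matrix

theorem legendre_H₀_mul_transpose :
    ((√2 / 4) • !![2, 0; √3, 1] : Matrix (Fin 2) (Fin 2) ℝ) * ((√2 / 4) • !![2, 0; √3, 1])ᵀ =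
      (1 / 4 : ℝ) • !![2, √3; √3, 2] := by
  ext i j
  fin_cases i <;> fin_cases j <;> simp [mul_apply, Fin.sum_univ_two] <;> grind

theorem legendre_spectral_factor_zeroth :
    ((√2 / 4) • !![2, 0; √3, 1] : Matrix (Fin 2) (Fin 2) ℝ) * ((√2 / 4) • !![2, 0; √3, 1])ᵀ +
      ((√2 / 4) • !![2, 0; -√3, 1] : Matrix (Fin 2) (Fin 2) ℝ) * ((√2 / 4) • !![2, 0; -√3, 1])ᵀ =
      !![1, 0; 0, 1] := by
  ext i j
  fin_cases i <;> fin_cases j <;> simp [vecMul, dotProduct, Fin.sum_univ_two] <;> grind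

theorem legendre_spectral_factor_first :
    ((√2 / 4) • !![2, 0; √3, 1] : Matrix (Fin 2) (Fin 2) ℝ) * ((√2 / 4) • !![2, 0; -√3, 1])ᵀ =
      (1 / 4 : ℝ) • !![2, -√3; √3, -1] := by
  ext i j
  fin_cases i <;> fin_cases j <;> simp [mul_apply, Fin.sum_univ_two] <;> grind

theorem isUnit_det_legendre_H₀ :
    IsUnit ((√2 / 4) • !![2, 0; √3, 1] : Matrix (Fin 2) (Fin 2) ℝ).det := by
  simp [det_fin_two_of]

/-- The Legendre multiscaling function of order 2: `X = (1/4)·[[2,√3],[√3,2]]`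
is positive definite, solves the NME `X = P₀ − P₁ᵀ X⁻¹ P₁`, and `H₀`, `H₁`
give the spectral factorization. -/
theorem legendre_order_two_example
    (P₀ P₁ X H₀ H₁ : Matrix (Fin 2) (Fin 2) ℝ)
    (hP₀ : P₀ = !![1, 0; 0, 1])
    (hP₁ : P₁ = (1 / 4 : ℝ) • !![2, -Real.sqrt 3; Real.sqrt 3, -1])
    (hX : X = (1 / 4 : ℝ) • !![2, Real.sqrt 3; Real.sqrt 3, 2])
    (hH₀ : H₀ = (Real.sqrt 2 / 4) • !![2, 0; Real.sqrt 3, 1])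
    (hH₁ : H₁ = (Real.sqrt 2 / 4) • !![2, 0; -Real.sqrt 3, 1]) :
    X.PosDef ∧ X = P₀ - P₁ᵀ * X⁻¹ * P₁ ∧
    H₀ * H₀ᵀ + H₁ * H₁ᵀ = P₀ ∧ H₀ * H₁ᵀ = P₁ := by
  subst hP₀ hP₁ hX hH₀ hH₁
  have hdet := isUnit_det_legendre_H₀
  have hsum := legendre_spectral_factor_zeroth
  have hcross := legendre_spectral_factor_first
  rw [← legendre_H₀_mul_transpose]
  exact ⟨posDef_mul_transpose_self hdet,
    mul_transpose_self_eq_sub_of_spectral_factor hdet hsum hcross, hsum, hcross⟩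
end

section
/- Let P₀ be the 5×5 identity matrix and P₁ = (1/256)·[[128, 64√3, 0, −16√7, 0],[−64√3, −64, 16√15, 16√21, −8√3],[0, −16√15, −112, −8√35, 24√5],[16√7, 16√21, 8√35, −40, −39√7],[0, 8√3, 24√5, 39√7, 53]] (real 5×5 matrices). Then X = (1/256)·[[128, −64√3, 0, 16√7, 0],[−64√3, 128, −16√15, 0, 8√3],[0, −16√15, 128, −16√35, 0],[16√7, 0, −16√35, 128, −21√7],[0, 8√3, 0, −21√7, 128]] satisfies the nonlinear matrix equation X = P₀ − P₁ᵀX⁻¹P₁, and the matrices H₀ = (√2/32)·[[16,0,0,0,0],[−8√3,8,0,0,0],[0,−4√15,4,0,0],[2√7,2√21,−2√35,2,0],[0,2√3,6√5,3√7,1]] and H₁ = (√2/32)·[[16,0,0,0,0],[8√3,8,0,0,0],[0,4√15,4,0,0],[−2√7,2√21,2√35,2,0],[0,−2√3,6√5,−3√7,1]] satisfy the spectral factorization identities H₀H₀ᵀ + H₁H₁ᵀ = P₀ and H₀H₁ᵀ = P₁. -/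
open Matrix

/-!
Writing `X = H₀H₀ᵀ`, the equation `X = P₀ − P₁ᵀX⁻¹P₁` is a formal consequence of the two
factorization identities: `P₁ᵀ X⁻¹ P₁ = H₁H₀ᵀ (H₀ᵀ)⁻¹ H₀⁻¹ H₀H₁ᵀ = H₁H₁ᵀ` once `H₀` is invertible,
and `P₀ − H₁H₁ᵀ = H₀H₀ᵀ`. The explicit `H₀` is lower triangular with nonzero diagonal, and
`X = H₀H₀ᵀ` together with the factorization identities are finite computations in
`ℚ(√2, √3, √5, √7)`, after splitting `√15`, `√21`, `√35` into products.
-/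

/-- `H(z) = H₀ + H₁z⁻¹` is a left spectral factor of `P(z) = P₁ᵀz⁻¹ + P₀ + P₁z`. -/
def Matrix.IsSpectralFactor {n R : Type*} [Fintype n] [CommRing R]
    (P₀ P₁ H₀ H₁ : Matrix n n R) : Prop :=
  H₀ * H₀ᵀ + H₁ * H₁ᵀ = P₀ ∧ H₀ * H₁ᵀ = P₁

theorem Matrix.IsSpectralFactor.mul_transpose_eq_sub {n R : Type*} [Fintype n] [DecidableEq n]
    [CommRing R] {P₀ P₁ H₀ H₁ : Matrix n n R} (h : IsSpectralFactor P₀ P₁ H₀ H₁)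
    (hH₀ : IsUnit H₀.det) :
    H₀ * H₀ᵀ = P₀ - P₁ᵀ * (H₀ * H₀ᵀ)⁻¹ * P₁ := by
  have hH₀t : IsUnit H₀ᵀ.det := by rwa [det_transpose]
  have hquad : P₁ᵀ * (H₀ * H₀ᵀ)⁻¹ * P₁ = H₁ * H₁ᵀ := by
    rw [← h.2, transpose_mul, transpose_transpose, mul_inv_rev]
    calc H₁ * H₀ᵀ * (H₀ᵀ⁻¹ * H₀⁻¹) * (H₀ * H₁ᵀ)
        = H₁ * (H₀ᵀ * H₀ᵀ⁻¹) * (H₀⁻¹ * H₀) * H₁ᵀ := by simp only [Matrix.mul_assoc]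
      _ = H₁ * H₁ᵀ := by rw [mul_nonsing_inv _ hH₀t, nonsing_inv_mul _ hH₀, mul_one, mul_one]
  rw [hquad, ← h.1, add_sub_cancel_right]

theorem Matrix.smul_mul_transpose_smul {n R : Type*} [Fintype n] [CommRing R] (c : R)
    (A B : Matrix n n R) : c • A * (c • B)ᵀ = (c * c) • (A * Bᵀ) := by
  rw [transpose_smul, Matrix.smul_mul, Matrix.mul_smul, smul_smul]

theorem Real.sqrt_15 : √15 = √3 * √5 := by
  rw [← Real.sqrt_mul (by norm_num)]; norm_num

theorem Real.sqrt_21 : √21 = √3 * √7 := by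
  rw [← Real.sqrt_mul (by norm_num)]; norm_num

theorem Real.sqrt_35 : √35 = √5 * √7 := by
  rw [← Real.sqrt_mul (by norm_num)]; norm_num

namespace Legendre5

/-! The matrices of the statement with their scalar factors removed: there
`H₀`, `H₁` carry the factor `√2 / 32` and `P₁`, `X` the factor `1 / 256`. -/

noncomputable def H₀ : Matrix (Fin 5) (Fin 5) ℝ :=
  !![16, 0, 0, 0, 0;
     -8 * Real.sqrt 3, 8, 0, 0, 0;
     0, -4 * Real.sqrt 15, 4, 0, 0;
     2 * Real.sqrt 7, 2 * Real.sqrt 21, -2 * Real.sqrt 35, 2, 0;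
     0, 2 * Real.sqrt 3, 6 * Real.sqrt 5, 3 * Real.sqrt 7, 1]

noncomputable def H₁ : Matrix (Fin 5) (Fin 5) ℝ :=
  !![16, 0, 0, 0, 0;
     8 * Real.sqrt 3, 8, 0, 0, 0;
     0, 4 * Real.sqrt 15, 4, 0, 0;
     -2 * Real.sqrt 7, 2 * Real.sqrt 21, 2 * Real.sqrt 35, 2, 0;
     0, -2 * Real.sqrt 3, 6 * Real.sqrt 5, -3 * Real.sqrt 7, 1]

noncomputable def P₁ : Matrix (Fin 5) (Fin 5) ℝ :=
  !![128, 64 * Real.sqrt 3, 0, -16 * Real.sqrt 7, 0;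
     -64 * Real.sqrt 3, -64, 16 * Real.sqrt 15, 16 * Real.sqrt 21,
       -8 * Real.sqrt 3;
     0, -16 * Real.sqrt 15, -112, -8 * Real.sqrt 35, 24 * Real.sqrt 5;
     16 * Real.sqrt 7, 16 * Real.sqrt 21, 8 * Real.sqrt 35, -40,
       -39 * Real.sqrt 7;
     0, 8 * Real.sqrt 3, 24 * Real.sqrt 5, 39 * Real.sqrt 7, 53]

noncomputable def X : Matrix (Fin 5) (Fin 5) ℝ :=
  !![128, -64 * Real.sqrt 3, 0, 16 * Real.sqrt 7, 0;
     -64 * Real.sqrt 3, 128, -16 * Real.sqrt 15, 0, 8 * Real.sqrt 3;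
     0, -16 * Real.sqrt 15, 128, -16 * Real.sqrt 35, 0;
     16 * Real.sqrt 7, 0, -16 * Real.sqrt 35, 128, -21 * Real.sqrt 7;
     0, 8 * Real.sqrt 3, 0, -21 * Real.sqrt 7, 128]

theorem H₀_mul_transpose_add_H₁_mul_transpose : H₀ * H₀ᵀ + H₁ * H₁ᵀ = (512 : ℝ) • 1 := by
  ext i j
  simp only [Matrix.add_apply, Matrix.smul_apply, mul_apply, transpose_apply, Fin.sum_univ_five]
  fin_cases i <;> fin_cases j <;>
    simp [H₀, H₁, Real.sqrt_15, Real.sqrt_21, Real.sqrt_35] <;> ring_nf <;> simp <;> ring_nf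

theorem H₀_mul_transpose_H₁ : H₀ * H₁ᵀ = (2 : ℝ) • P₁ := by
  ext i j
  simp only [Matrix.smul_apply, mul_apply, transpose_apply, Fin.sum_univ_five]
  fin_cases i <;> fin_cases j <;>
    simp [H₀, H₁, P₁, Real.sqrt_15, Real.sqrt_21, Real.sqrt_35] <;> ring_nf <;> simp <;> ring_nf

theorem H₀_mul_transpose_self : H₀ * H₀ᵀ = (2 : ℝ) • X := by
  ext i j
  simp only [Matrix.smul_apply, mul_apply, transpose_apply, Fin.sum_univ_five]
  fin_cases i <;> fin_cases j <;>
    simp [H₀, X, Real.sqrt_15, Real.sqrt_21, Real.sqrt_35] <;> ring_nf <;> simp <;> ring_nf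

theorem H₀_isLowerTriangular : H₀.IsLowerTriangular := by
  intro i j (hij : i < j)
  fin_cases i <;> fin_cases j <;> simp_all [H₀]

theorem det_H₀ : H₀.det = 1024 := by
  rw [det_of_isLowerTriangular _ H₀_isLowerTriangular, Fin.prod_univ_five]
  simp [H₀]
  norm_num

end Legendre5

/-- The Legendre multiscaling function of order 5: the 5×5 matrix `X` solves
the NME `X = P₀ − P₁ᵀ X⁻¹ P₁`, and `H₀`, `H₁` give the spectral factorization
`H₀H₀ᵀ + H₁H₁ᵀ = P₀`, `H₀H₁ᵀ = P₁`. -/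
theorem legendre_order_five_example
    (P₀ P₁ X H₀ H₁ : Matrix (Fin 5) (Fin 5) ℝ)
    (hP₀ : P₀ = 1)
    (hP₁ : P₁ = (1 / 256 : ℝ) •
      !![128, 64 * Real.sqrt 3, 0, -16 * Real.sqrt 7, 0;
         -64 * Real.sqrt 3, -64, 16 * Real.sqrt 15, 16 * Real.sqrt 21,
           -8 * Real.sqrt 3;
         0, -16 * Real.sqrt 15, -112, -8 * Real.sqrt 35, 24 * Real.sqrt 5;
         16 * Real.sqrt 7, 16 * Real.sqrt 21, 8 * Real.sqrt 35, -40,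
           -39 * Real.sqrt 7;
         0, 8 * Real.sqrt 3, 24 * Real.sqrt 5, 39 * Real.sqrt 7, 53])
    (hX : X = (1 / 256 : ℝ) •
      !![128, -64 * Real.sqrt 3, 0, 16 * Real.sqrt 7, 0;
         -64 * Real.sqrt 3, 128, -16 * Real.sqrt 15, 0, 8 * Real.sqrt 3;
         0, -16 * Real.sqrt 15, 128, -16 * Real.sqrt 35, 0;
         16 * Real.sqrt 7, 0, -16 * Real.sqrt 35, 128, -21 * Real.sqrt 7;
         0, 8 * Real.sqrt 3, 0, -21 * Real.sqrt 7, 128])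
    (hH₀ : H₀ = (Real.sqrt 2 / 32) •
      !![16, 0, 0, 0, 0;
         -8 * Real.sqrt 3, 8, 0, 0, 0;
         0, -4 * Real.sqrt 15, 4, 0, 0;
         2 * Real.sqrt 7, 2 * Real.sqrt 21, -2 * Real.sqrt 35, 2, 0;
         0, 2 * Real.sqrt 3, 6 * Real.sqrt 5, 3 * Real.sqrt 7, 1])
    (hH₁ : H₁ = (Real.sqrt 2 / 32) •
      !![16, 0, 0, 0, 0;
         8 * Real.sqrt 3, 8, 0, 0, 0;
         0, 4 * Real.sqrt 15, 4, 0, 0;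
         -2 * Real.sqrt 7, 2 * Real.sqrt 21, 2 * Real.sqrt 35, 2, 0;
         0, -2 * Real.sqrt 3, 6 * Real.sqrt 5, -3 * Real.sqrt 7, 1]) :
    X = P₀ - P₁ᵀ * X⁻¹ * P₁ ∧
    H₀ * H₀ᵀ + H₁ * H₁ᵀ = P₀ ∧ H₀ * H₁ᵀ = P₁ := by
  have hc : Real.sqrt 2 / 32 * (Real.sqrt 2 / 32) = 1 / 512 := by
    rw [div_mul_div_comm, Real.mul_self_sqrt zero_le_two]; norm_num
  change H₀ = (Real.sqrt 2 / 32) • Legendre5.H₀ at hH₀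
  change H₁ = (Real.sqrt 2 / 32) • Legendre5.H₁ at hH₁
  change P₁ = (1 / 256 : ℝ) • Legendre5.P₁ at hP₁
  change X = (1 / 256 : ℝ) • Legendre5.X at hX
  have hfac : IsSpectralFactor P₀ P₁ H₀ H₁ := by
    refine ⟨?_, ?_⟩
    · rw [hH₀, hH₁, hP₀, smul_mul_transpose_smul, smul_mul_transpose_smul, hc, ← smul_add,
        Legendre5.H₀_mul_transpose_add_H₁_mul_transpose, smul_smul]
      norm_num
    · rw [hH₀, hH₁, hP₁, smul_mul_transpose_smul, hc, Legendre5.H₀_mul_transpose_H₁, smul_smul]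
      norm_num
  have hX_eq : X = H₀ * H₀ᵀ := by
    rw [hX, hH₀, smul_mul_transpose_smul, hc, Legendre5.H₀_mul_transpose_self, smul_smul]
    norm_num
  have hdet : IsUnit H₀.det := by
    rw [hH₀, det_smul, Legendre5.det_H₀, isUnit_iff_ne_zero]
    positivity
  rw [hX_eq]
  exact ⟨hfac.mul_transpose_eq_sub hdet, hfac⟩
end

section
/- Let P₀ = [[1,0],[0,1]], P₁ = (1/8)·[[4,−(1+√7)],[1+√7,−√7]], and P₋₁ = P₁ᵀ (real 2×2 matrices), and define the matrix Laurent polynomial P(z) = P₋₁z⁻¹ + P₀ + P₁z with complex argument. Then for every nonzero complex number z, det P(z) = (4−√7)·(1+z)⁴/(32·z²); in particular det P(z) has a quadruple zero at z = −1 on the unit circle, so this matrix spectral factorization problem is singular. -/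
open Matrix

/-!
For a `2 × 2` matrix `A` and `w = z + z⁻¹`, the symmetric Laurent polynomial
`z⁻¹ Aᵀ + 1 + z A` has determinant `1 - (A₀₁ - A₁₀)² + tr A · w + det A · w²`.
For the Chui–Lian coefficient `P₁` all three coefficients are multiples of `4 - √7`,
in the ratio `4 : 4 : 1`, so the determinant is `(4 - √7) (w + 2)² / 32`,
and `w + 2 = (1 + z)² / z`.
-/

theorem det_inv_smul_transpose_add_one_add_smul_fin_two {K : Type*} [Field K]
    (A : Matrix (Fin 2) (Fin 2) K) {z : K} (hz : z ≠ 0) :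
    (z⁻¹ • Aᵀ + 1 + z • A).det =
      1 - (A 0 1 - A 1 0) ^ 2 + A.trace * (z + z⁻¹) + A.det * (z + z⁻¹) ^ 2 := by
  simp only [det_fin_two, trace_fin_two, Matrix.add_apply, Matrix.smul_apply, transpose_apply,
    one_apply_eq, one_apply_ne zero_ne_one, one_apply_ne one_ne_zero, smul_eq_mul]
  field_simp
  ring

section ChuiLian

local notation "√7" => (Real.sqrt 7 : ℂ)

noncomputable def chuiLianP₁ : Matrix (Fin 2) (Fin 2) ℂ :=
  (1 / 8 : ℂ) • !![4, -(1 + √7); 1 + √7, -√7]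

lemma sq_sqrt_seven : √7 ^ 2 = 7 := by
  rw [← Complex.ofReal_pow, Real.sq_sqrt (by norm_num)]
  norm_num

lemma chuiLianP₁_eq : chuiLianP₁ = !![1 / 2, -(1 + √7) / 8; (1 + √7) / 8, -√7 / 8] := by
  ext i j
  fin_cases i <;> fin_cases j <;> simp [chuiLianP₁] <;> ring

lemma one_sub_sq_skew_chuiLianP₁ :
    1 - (chuiLianP₁ 0 1 - chuiLianP₁ 1 0) ^ 2 = (4 - √7) / 8 := by
  simp only [chuiLianP₁_eq, of_apply, cons_val', cons_val_zero, cons_val_one, cons_val_fin_one]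
  linear_combination (-1 / 16 : ℂ) * sq_sqrt_seven

lemma trace_chuiLianP₁ : chuiLianP₁.trace = (4 - √7) / 8 := by
  rw [chuiLianP₁_eq, trace_fin_two_of]
  ring

lemma det_chuiLianP₁ : chuiLianP₁.det = (4 - √7) / 32 := by
  rw [chuiLianP₁_eq, det_fin_two_of]
  linear_combination (1 / 64 : ℂ) * sq_sqrt_seven

lemma det_inv_smul_transpose_add_one_add_smul_chuiLianP₁ {z : ℂ} (hz : z ≠ 0) :
    (z⁻¹ • chuiLianP₁ᵀ + 1 + z • chuiLianP₁).det =
      (4 - √7) * (1 + z) ^ 4 / (32 * z ^ 2) := by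
  rw [det_inv_smul_transpose_add_one_add_smul_fin_two _ hz, one_sub_sq_skew_chuiLianP₁,
    trace_chuiLianP₁, det_chuiLianP₁]
  field_simp
  ring

end ChuiLian

/-- The Chui–Lian product filter `P(z) = P₁ᵀ z⁻¹ + P₀ + P₁ z` has determinant
`det P(z) = (4 − √7)(1+z)⁴ / (32 z²)` for every nonzero complex `z`; in
particular it vanishes (to fourth order) at `z = −1`, a point on the unit
circle, so the matrix spectral factorization problem is singular. -/
theorem chui_lian_determinant_singular
    (P₀ P₁ : Matrix (Fin 2) (Fin 2) ℂ)
    (hP₀ : P₀ = 1)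
    (hP₁ : P₁ = (1 / 8 : ℂ) •
      !![4, -(1 + (Real.sqrt 7 : ℂ)); 1 + (Real.sqrt 7 : ℂ),
         -(Real.sqrt 7 : ℂ)]) :
    (∀ z : ℂ, z ≠ 0 →
      (z⁻¹ • P₁ᵀ + P₀ + z • P₁).det
        = ((4 - Real.sqrt 7 : ℝ) : ℂ) * (1 + z) ^ 4 / (32 * z ^ 2)) ∧
    ((-1 : ℂ)⁻¹ • P₁ᵀ + P₀ + (-1 : ℂ) • P₁).det = 0 ∧
    ‖(-1 : ℂ)‖ = 1 := by
  obtain rfl : P₁ = chuiLianP₁ := hP₁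
  subst hP₀
  have hdet (z : ℂ) (hz : z ≠ 0) := det_inv_smul_transpose_add_one_add_smul_chuiLianP₁ hz
  push_cast
  refine ⟨hdet, ?_, by simp⟩
  rw [hdet (-1) (by norm_num)]
  norm_num
end
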